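/- arXiv:math/0404077 — 3 statements merged into one kernel-verified Lean document; each statement's English description precedes it below -/
import Mathlib

section
/- For all complex numbers x, y, all nonnegative integers r and j, the identity sum_{k=0}^{r} binom(x, r-k) * G_{k,j}(y) = G_{r,j}(x+y) holds, where G_{r,j} are the polynomials defined by the generating expansion binom(z-u, r-1) = sum_{j=0}^{r-1} G_{r,j}(z) u^j (as a polynomial identity in u), with G_{r,j} = 0 for j >= r. -/
open Finset

/-- Generalized binomial coefficient `z(z-1)⋯(z-n+1)/n!`. -/
noncomputable def gbinom (z : ℂ) (n : ℕ) : ℂ :=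
  (∏ i ∈ Finset.range n, (z - i)) / (Nat.factorial n : ℂ)

/-- Coefficient polynomials `G_{r,j}(z)` of `binom(z-u, r-1)` expanded in powers of `u`,
with `G_{r,j} = 0` for `j ≥ r`. -/
noncomputable def Grj (r j : ℕ) (z : ℂ) : ℂ :=
  if j < r then
    (∏ i ∈ Finset.range (r - 1), (Polynomial.C (z - i) - Polynomial.X)).coeff j
      / (Nat.factorial (r - 1) : ℂ)
  else 0

/-- Signed Stirling numbers of the first kind, `t(t-1)⋯(t-n+1) = ∑_j s(n,j) t^j`. -/
noncomputable def stirS (n j : ℕ) : ℂ :=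
  (∏ i ∈ Finset.range n, (Polynomial.X - Polynomial.C (i : ℂ))).coeff j

lemma descPoch_smeval_prod {R : Type*} [CommRing R] (r : R) (n : ℕ) :
    (descPochhammer ℤ n).smeval r = ∏ i ∈ range n, (r - i) := by
  induction n with
  | zero => simp
  | succ n ih =>
    rw [descPochhammer_succ_right, Polynomial.smeval_mul, ih, prod_range_succ,
      Polynomial.smeval_sub, Polynomial.smeval_X, Polynomial.smeval_natCast]
    simp

lemma choose_C (x : ℂ) (n : ℕ) :
    Ring.choose (Polynomial.C x) n = Polynomial.C (gbinom x n) := by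
  apply smul_right_injective (Polynomial ℂ) (Nat.factorial_ne_zero n)
  show n.factorial • Ring.choose (Polynomial.C x) n = n.factorial • Polynomial.C (gbinom x n)
  rw [← Ring.descPochhammer_eq_factorial_smul_choose, descPoch_smeval_prod]
  have h : gbinom x n * n.factorial = ∏ i ∈ range n, (x - i) := by
    rw [gbinom, div_mul_cancel₀]
    exact_mod_cast Nat.factorial_ne_zero n
  rw [nsmul_eq_mul, ← Polynomial.C_eq_natCast, ← Polynomial.C_mul, mul_comm, h]
  rw [map_prod]
  refine prod_congr rfl fun i _ => ?_
  simp [Polynomial.C_sub, Polynomial.C_eq_natCast]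

lemma choose_coeff (y : ℂ) (n j : ℕ) :
    (Ring.choose (Polynomial.C y - Polynomial.X) n).coeff j
      = (∏ i ∈ range n, (Polynomial.C (y - i) - Polynomial.X)).coeff j
        / (Nat.factorial n : ℂ) := by
  have h : (n.factorial : Polynomial ℂ) * Ring.choose (Polynomial.C y - Polynomial.X) n
      = ∏ i ∈ range n, (Polynomial.C (y - i) - Polynomial.X) := by
    rw [← nsmul_eq_mul, ← Ring.descPochhammer_eq_factorial_smul_choose, descPoch_smeval_prod]
    refine prod_congr rfl fun i _ => ?_
    simp [Polynomial.C_sub, Polynomial.C_eq_natCast]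
    ring
  have h2 := congrArg (fun p => Polynomial.coeff p j) h
  simp only [Polynomial.coeff_natCast_mul] at h2
  rw [← h2, mul_comm, mul_div_assoc, div_self, mul_one]
  exact_mod_cast Nat.factorial_ne_zero n

lemma grj_eq (y : ℂ) (n j : ℕ) :
    Grj (n + 1) j y = (Ring.choose (Polynomial.C y - Polynomial.X) n).coeff j := by
  rw [choose_coeff, Grj]
  by_cases h : j < n + 1
  · simp [h]
  · simp only [h, if_false]
    rw [Polynomial.coeff_eq_zero_of_natDegree_lt, zero_div]
    calc (∏ i ∈ range n, (Polynomial.C (y - i) - Polynomial.X)).natDegree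
        ≤ ∑ i ∈ range n, (Polynomial.C (y - (i:ℂ)) - Polynomial.X).natDegree :=
          Polynomial.natDegree_prod_le _ _
      _ ≤ ∑ i ∈ range n, 1 := by
          refine sum_le_sum fun i _ => ?_
          compute_degree
      _ = n := by simp
      _ < j := by omega

theorem vandermonde_Grj (x y : ℂ) (r j : ℕ) :
    ∑ k ∈ Finset.range (r + 1), gbinom x (r - k) * Grj k j y = Grj r j (x + y) := by
  cases r with
  | zero => simp [Grj]
  | succ n =>
    set Q : ℕ → ℂ := fun m => (Ring.choose (Polynomial.C y - Polynomial.X) m).coeff j with hQ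
    have hL : ∑ k ∈ Finset.range (n + 2), gbinom x (n + 1 - k) * Grj k j y
        = ∑ k ∈ range (n + 1), gbinom x (n - k) * Q k := by
      rw [Finset.sum_range_succ']
      have h0 : Grj 0 j y = 0 := by simp [Grj]
      rw [h0, mul_zero, add_zero]
      refine sum_congr rfl fun k hk => ?_
      rw [grj_eq]
      congr 2
      omega
    have hR : Grj (n + 1) j (x + y) = ∑ k ∈ range (n + 1), gbinom x (n - k) * Q k := by
      rw [grj_eq]
      have hsplit : Polynomial.C (x + y) - Polynomial.X
          = Polynomial.C x + (Polynomial.C y - Polynomial.X) := by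
        rw [Polynomial.C_add]; ring
      rw [hsplit, Ring.add_choose_eq n (Commute.all _ _),
        Finset.Nat.sum_antidiagonal_eq_sum_range_succ_mk, Polynomial.finset_sum_coeff]
      have h1 : ∀ b ∈ range (n + 1),
          (Ring.choose (Polynomial.C x) (b, n - b).1
            * Ring.choose (Polynomial.C y - Polynomial.X) (b, n - b).2).coeff j
          = gbinom x b * Q (n - b) := by
        intro b _
        rw [choose_C, Polynomial.coeff_C_mul]
      rw [sum_congr rfl h1,
        ← Finset.sum_range_reflect (fun k => gbinom x (n - k) * Q k) (n + 1)]
      refine sum_congr rfl fun k hk => ?_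
      rw [mem_range] at hk
      show gbinom x _ * Q _ = gbinom x _ * Q _
      congr 2 <;> omega
    rw [hL, hR]
end

section
/- For every complex number z that is not a negative integer, Gamma(z+1) = product over n >= 1 of [ (1 + z/n)^{-1} * (1 + 1/n)^z ], where the infinite product converges (the Euler product representation). -/
open Filter

-- Step A: closed form of the partial product
lemma stepA (z : ℂ) (hz : ∀ n : ℕ, z ≠ -((n : ℂ) + 1)) (N : ℕ) :
    (∏ n ∈ Finset.range N,
        ((1 + z / (n + 1))⁻¹ * Complex.exp (z * (Real.log (1 + 1 / ((n : ℝ) + 1)) : ℂ)))) =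
      Complex.exp (z * (Real.log (N + 1) : ℂ)) * ((Nat.factorial N : ℕ) : ℂ) /
        ∏ n ∈ Finset.range N, (z + (n + 1)) := by
  induction N with
  | zero => simp
  | succ N ih =>
      have hne : ∀ n : ℕ, z + ((n : ℂ) + 1) ≠ 0 := by
        intro n h
        exact hz n (by linear_combination h)
      have h1 : ((N : ℝ) + 1) ≠ 0 := by positivity
      have hlog : Real.log ((N + 1 : ℕ) + 1) =
          Real.log ((N : ℝ) + 1) + Real.log (1 + 1 / ((N : ℝ) + 1)) := by
        rw [← Real.log_mul h1 (by positivity)]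
        congr 1
        push_cast
        field_simp
      rw [Finset.prod_range_succ, ih, Finset.prod_range_succ, hlog]
      have hN1 : ((N : ℂ) + 1) ≠ 0 := Nat.cast_add_one_ne_zero N
      have hd : (1 + z / ((N : ℂ) + 1)) ≠ 0 := by
        intro h
        apply hne N
        field_simp [hN1] at h
        linear_combination h
      rw [Complex.ofReal_add, mul_add, Complex.exp_add, Nat.factorial_succ]
      have hprodne : (∏ n ∈ Finset.range N, (z + ((n : ℂ) + 1))) ≠ 0 :=
        Finset.prod_ne_zero_iff.mpr fun n _ => hne n
      have h2 : (1 + z / ((N : ℂ) + 1))⁻¹ = ((N : ℂ) + 1) / (z + ((N : ℂ) + 1)) := by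
        rw [show (1 + z / ((N : ℂ) + 1)) = (z + ((N : ℂ) + 1)) / ((N : ℂ) + 1) by
          field_simp [hN1]; ring, inv_div]
      rw [h2]
      push_cast
      field_simp

lemma stepB (z : ℂ) (hz : ∀ n : ℕ, z ≠ -((n : ℂ) + 1)) {N : ℕ} (hN : 1 ≤ N) :
    Complex.exp (z * (Real.log (N + 1) : ℂ)) * ((Nat.factorial N : ℕ) : ℂ) /
        ∏ n ∈ Finset.range N, (z + (n + 1)) =
      Complex.GammaSeq (z + 1) N *
        (Complex.exp (z * (Real.log (1 + 1 / (N : ℝ)) : ℂ)) * (1 + (z + 1) / N)) := by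
  have hne : ∀ n : ℕ, z + ((n : ℂ) + 1) ≠ 0 := by
    intro n h
    exact hz n (by linear_combination h)
  have hN0 : (N : ℝ) ≠ 0 := by positivity
  have hN0' : (N : ℂ) ≠ 0 := Nat.cast_ne_zero.mpr (by omega)
  have hprodne : (∏ n ∈ Finset.range N, (z + ((n : ℂ) + 1))) ≠ 0 :=
    Finset.prod_ne_zero_iff.mpr fun n _ => hne n
  have hlog : Real.log ((N : ℝ) + 1) = Real.log N + Real.log (1 + 1 / (N : ℝ)) := by
    rw [← Real.log_mul hN0 (by positivity)]
    congr 1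
    field_simp
  have hcpow : (N : ℂ) ^ (z + 1) =
      Complex.exp (z * (Real.log N : ℂ)) * (N : ℂ) := by
    rw [Complex.cpow_def_of_ne_zero hN0', Complex.natCast_log, mul_comm, add_mul, one_mul,
      Complex.exp_add, Complex.exp_log hN0']
  have hprod : (∏ j ∈ Finset.range (N + 1), (z + 1 + (j : ℂ))) =
      (∏ n ∈ Finset.range N, (z + ((n : ℂ) + 1))) * (z + 1 + N) := by
    rw [Finset.prod_range_succ]
    congr 1
    exact Finset.prod_congr rfl fun j _ => by ring
  have hlast : z + 1 + (N : ℂ) ≠ 0 := by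
    intro h
    exact hne N (by linear_combination h)
  rw [Complex.GammaSeq, hcpow, hprod, hlog, Complex.ofReal_add, mul_add, Complex.exp_add]
  field_simp
  ring

lemma stepC (z : ℂ) :
    Tendsto (fun N : ℕ =>
        Complex.exp (z * (Real.log (1 + 1 / (N : ℝ)) : ℂ)) * (1 + (z + 1) / N))
      atTop (nhds 1) := by
  have h1 : Tendsto (fun N : ℕ => Real.log (1 + 1 / (N : ℝ))) atTop (nhds 0) := by
    have : Tendsto (fun N : ℕ => 1 + 1 / (N : ℝ)) atTop (nhds 1) := by
      simpa using tendsto_const_nhds.add (tendsto_one_div_atTop_nhds_zero_nat (𝕜 := ℝ))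
    simpa [Function.comp_def] using (Real.continuousAt_log one_ne_zero).tendsto.comp this
  have h2 : Tendsto (fun N : ℕ =>
      Complex.exp (z * (Real.log (1 + 1 / (N : ℝ)) : ℂ))) atTop (nhds 1) := by
    have : Tendsto (fun N : ℕ => z * (Real.log (1 + 1 / (N : ℝ)) : ℂ)) atTop (nhds 0) := by
      simpa using tendsto_const_nhds.mul
        ((Complex.continuous_ofReal.tendsto 0).comp h1)
    simpa [Function.comp_def] using (Complex.continuous_exp.tendsto 0).comp this
  have h3 : Tendsto (fun N : ℕ => 1 + (z + 1) / (N : ℂ)) atTop (nhds 1) := by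
    have : Tendsto (fun N : ℕ => (z + 1) / (N : ℂ)) atTop (nhds 0) := by
      have hc : Tendsto (fun N : ℕ => ((1 / (N : ℝ) : ℝ) : ℂ)) atTop (nhds 0) := by
        simpa [Function.comp_def] using (Complex.continuous_ofReal.tendsto 0).comp
          tendsto_one_div_atTop_nhds_zero_nat
      have : Tendsto (fun N : ℕ => (z + 1) * ((1 / (N : ℝ) : ℝ) : ℂ)) atTop (nhds 0) := by
        simpa using tendsto_const_nhds.mul hc
      refine this.congr fun N => ?_
      push_cast
      ring
    simpa using tendsto_const_nhds.add this
  simpa using h2.mul h3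

/-- Euler product representation:
`Γ(z+1) = ∏_{n≥1} (1+z/n)⁻¹ (1+1/n)^z` for `z` not a negative integer;
the infinite product converges to this value. -/
theorem Gamma_euler_product (z : ℂ) (hz : ∀ n : ℕ, z ≠ -((n : ℂ) + 1)) :
    Tendsto
      (fun N : ℕ => ∏ n ∈ Finset.range N,
        ((1 + z / (n + 1))⁻¹ * Complex.exp (z * (Real.log (1 + 1 / ((n : ℝ) + 1)) : ℂ))))
      atTop (nhds (Complex.Gamma (z + 1))) := by
  have main : Tendsto (fun N : ℕ => Complex.GammaSeq (z + 1) N *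
      (Complex.exp (z * (Real.log (1 + 1 / (N : ℝ)) : ℂ)) * (1 + (z + 1) / N)))
      atTop (nhds (Complex.Gamma (z + 1))) := by
    simpa using (Complex.GammaSeq_tendsto_Gamma (z + 1)).mul (stepC z)
  refine main.congr' ?_
  filter_upwards [eventually_ge_atTop 1] with N hN
  rw [← stepB z hz hN, ← stepA z hz N]
end

section
/- For every positive integer p and complex z with positive real part, the Gauss multiplication formula holds: product_{m=0}^{p-1} Gamma((z+m)/p) = (2*pi)^{(p-1)/2} * p^{1/2 - z} * Gamma(z). -/
open Finset Filter Topology Nat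

lemma prod_range_mul_aux {M : Type*} [CommMonoid M] (p n : ℕ) (hp : 0 < p) (f : ℕ → M) :
    ∏ k ∈ range (p * n), f k = ∏ m ∈ range p, ∏ j ∈ range n, f (m + p * j) := by
  rw [← Finset.prod_product']
  refine Finset.prod_nbij' (fun k => (k % p, k / p)) (fun x => x.1 + p * x.2) ?_ ?_ ?_ ?_ ?_
  · intro k hk
    simp only [mem_range] at hk
    simp only [mem_product, mem_range]
    exact ⟨Nat.mod_lt _ hp, (Nat.div_lt_iff_lt_mul hp).2 (by rw [mul_comm]; exact hk)⟩
  · rintro ⟨a, b⟩ h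
    simp only [mem_product, mem_range] at h
    simp only [mem_range]
    calc a + p * b < p + p * b := by omega
    _ = p * (b + 1) := by ring
    _ ≤ p * n := Nat.mul_le_mul_left _ h.2
  · intro k _
    simp [Nat.mod_add_div]
  · rintro ⟨a, b⟩ h
    simp only [mem_product, mem_range] at h
    simp [Nat.add_mul_mod_self_left, Nat.mod_eq_of_lt h.1, Nat.add_mul_div_left _ _ hp,
      Nat.div_eq_of_lt h.1]
  · intro k _
    simp [Nat.mod_add_div]

lemma fact_split (a b : ℕ) : (a + b)! = a ! * ∏ j ∈ Ico 1 (b + 1), (a + j) := by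
  induction b with
  | zero => simp
  | succ b ih =>
      have h2 : ∏ j ∈ Ico 1 (b + 1 + 1), (a + j)
          = (∏ j ∈ Ico 1 (b + 1), (a + j)) * (a + (b + 1)) :=
        Finset.prod_Ico_succ_top (by omega) _
      rw [← Nat.add_assoc, Nat.factorial_succ, ih, h2]
      ring

/-- the auxiliary constant sequence -/
noncomputable def Aseq (p n : ℕ) : ℝ :=
  (n : ℝ) ^ (((p : ℝ) - 1) / 2) * (n ! : ℝ) ^ p * (p : ℝ) ^ (p * (n + 1))
    / ((p * (n + 1) - 1)! : ℝ)

lemma Aseq_eq (p n : ℕ) (hp : 0 < p) (hn : 0 < n) :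
    Aseq p n = (Stirling.stirlingSeq n ^ p / Stirling.stirlingSeq (p * n))
      * (2 : ℝ) ^ (((p : ℝ) - 1) / 2) * (p : ℝ) ^ p / Real.sqrt p
      / ∏ j ∈ Ico 1 p, ((p : ℝ) + j / n) := by
  have hn' : (0:ℝ) < n := by exact_mod_cast hn
  have hp' : (0:ℝ) < p := by exact_mod_cast hp
  have hsn : 0 < Stirling.stirlingSeq n := by
    obtain ⟨m, rfl⟩ := Nat.exists_eq_succ_of_ne_zero hn.ne'
    exact Stirling.stirlingSeq'_pos m
  have hspn : 0 < Stirling.stirlingSeq (p * n) := by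
    obtain ⟨m, hm⟩ := Nat.exists_eq_succ_of_ne_zero (Nat.mul_pos hp hn).ne'
    rw [hm]; exact Stirling.stirlingSeq'_pos m
  have hQ : (0:ℝ) < ∏ j ∈ Ico 1 p, ((p : ℝ) + j / n) :=
    Finset.prod_pos fun j _ => by positivity
  have hL : 0 < Aseq p n := by
    unfold Aseq
    have := (p * (n + 1) - 1).factorial_pos
    positivity
  have hR : (0:ℝ) < (Stirling.stirlingSeq n ^ p / Stirling.stirlingSeq (p * n))
      * (2 : ℝ) ^ (((p : ℝ) - 1) / 2) * (p : ℝ) ^ p / Real.sqrt p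
      / ∏ j ∈ Ico 1 p, ((p : ℝ) + j / n) := by positivity
  refine Real.log_injOn_pos (Set.mem_Ioi.2 hL) (Set.mem_Ioi.2 hR) ?_
  -- split the big factorial
  have hsplit : ((p * (n + 1) - 1)! : ℝ)
      = ((p * n)! : ℝ) * ∏ j ∈ Ico 1 p, ((p * n : ℝ) + j) := by
    have h1 : p * (n + 1) - 1 = p * n + (p - 1) := by
      have : p * (n + 1) = p * n + p := by ring
      omega
    have h2 : p - 1 + 1 = p := by omega
    rw [h1, fact_split, h2]
    push_cast
    ring
  have hfactne : ∀ m : ℕ, ((m ! : ℝ)) ≠ 0 := fun m => by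
    exact_mod_cast m.factorial_pos.ne'
  -- log of LHS
  have hlogL : Real.log (Aseq p n)
      = (((p:ℝ)-1)/2) * Real.log n + p * Real.log (n !) + (p * (n+1)) * Real.log p
        - (Real.log ((p*n)!) + ∑ j ∈ Ico 1 p, Real.log ((p*n:ℝ) + j)) := by
    unfold Aseq
    rw [hsplit, Real.log_div (by positivity) (by positivity),
      Real.log_mul (by positivity) (by positivity),
      Real.log_mul (by positivity) (by positivity),
      Real.log_mul (by positivity) (by positivity),
      Real.log_rpow hn', Real.log_pow, Real.log_pow,
      Real.log_prod (fun j hj => by positivity)]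
    push_cast
    ring
  -- log of each factor of Q
  have hQterm : ∀ j ∈ Ico 1 p, Real.log ((p:ℝ) + j / n)
      = Real.log ((p*n:ℝ) + j) - Real.log n := by
    intro j hj
    have : (p:ℝ) + j / n = ((p*n:ℝ) + j) / n := by field_simp
    rw [this, Real.log_div (by positivity) (by positivity)]
  have hlogQ : Real.log (∏ j ∈ Ico 1 p, ((p : ℝ) + j / n))
      = (∑ j ∈ Ico 1 p, Real.log ((p*n:ℝ) + j)) - ((p:ℝ) - 1) * Real.log n := by
    rw [Real.log_prod (fun j hj => by positivity), Finset.sum_congr rfl hQterm,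
      Finset.sum_sub_distrib, Finset.sum_const, Nat.card_Ico, nsmul_eq_mul]
    have : ((p - 1 : ℕ) : ℝ) = (p:ℝ) - 1 := by
      push_cast [Nat.cast_sub hp]; ring
    rw [this]
  -- log of RHS
  have hlogR : Real.log ((Stirling.stirlingSeq n ^ p / Stirling.stirlingSeq (p * n))
      * (2 : ℝ) ^ (((p : ℝ) - 1) / 2) * (p : ℝ) ^ p / Real.sqrt p
      / ∏ j ∈ Ico 1 p, ((p : ℝ) + j / n))
      = p * Real.log (Stirling.stirlingSeq n) - Real.log (Stirling.stirlingSeq (p * n))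
        + (((p:ℝ)-1)/2) * Real.log 2 + p * Real.log p - Real.log p / 2
        - ((∑ j ∈ Ico 1 p, Real.log ((p*n:ℝ) + j)) - ((p:ℝ) - 1) * Real.log n) := by
    rw [Real.log_div (by positivity) hQ.ne', Real.log_div (by positivity) (by positivity),
      Real.log_mul (by positivity) (by positivity),
      Real.log_mul (by positivity) (by positivity),
      Real.log_div (pow_ne_zero p hsn.ne') hspn.ne', Real.log_pow, Real.log_rpow (by norm_num),
      Real.log_pow, Real.log_sqrt hp'.le, hlogQ]
  rw [hlogL, hlogR, Stirling.log_stirlingSeq_formula, Stirling.log_stirlingSeq_formula]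
  have hlogn : Real.log ((n:ℝ) / Real.exp 1) = Real.log n - 1 := by
    rw [Real.log_div hn'.ne' (Real.exp_pos 1).ne', Real.log_exp]
  have hlogpn : Real.log ((p*n:ℕ) / Real.exp 1) = Real.log p + Real.log n - 1 := by
    rw [Real.log_div (by positivity) (Real.exp_pos 1).ne']
    push_cast
    rw [Real.log_mul hp'.ne' hn'.ne', Real.log_exp]
  have hlog2n : Real.log (2 * (n:ℝ)) = Real.log 2 + Real.log n :=
    Real.log_mul (by norm_num) hn'.ne'
  have hlog2pn : Real.log (2 * ((p*n:ℕ):ℝ)) = Real.log 2 + Real.log p + Real.log n := by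
    push_cast
    rw [Real.log_mul (by norm_num) (by positivity), Real.log_mul hp'.ne' hn'.ne']
    ring
  rw [hlogn, hlogpn, hlog2n, hlog2pn]
  push_cast
  ring

lemma Aseq_tendsto (p : ℕ) (hp : 0 < p) :
    Tendsto (Aseq p) atTop
      (𝓝 ((2 * Real.pi) ^ (((p : ℝ) - 1) / 2) * Real.sqrt p)) := by
  have hp' : (0:ℝ) < p := by exact_mod_cast hp
  have hπ : (0:ℝ) < Real.sqrt Real.pi := Real.sqrt_pos.2 Real.pi_pos
  -- limit of the stirling ratio
  have hmul : Tendsto (fun n : ℕ => p * n) atTop atTop :=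
    tendsto_atTop_mono (fun n => Nat.le_mul_of_pos_left n hp) tendsto_id
  have hS : Tendsto (fun n => Stirling.stirlingSeq n ^ p / Stirling.stirlingSeq (p * n))
      atTop (𝓝 (Real.sqrt Real.pi ^ p / Real.sqrt Real.pi)) :=
    (Stirling.tendsto_stirlingSeq_sqrt_pi.pow p).div
      (Stirling.tendsto_stirlingSeq_sqrt_pi.comp hmul) hπ.ne'
  -- limit of the correction product
  have hQt : Tendsto (fun n : ℕ => ∏ j ∈ Ico 1 p, ((p : ℝ) + j / n)) atTop
      (𝓝 (∏ j ∈ Ico 1 p, (p : ℝ))) := by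
    refine tendsto_finset_prod _ fun j _ => ?_
    have : Tendsto (fun n : ℕ => (j : ℝ) / n) atTop (𝓝 0) :=
      Tendsto.div_atTop tendsto_const_nhds tendsto_natCast_atTop_atTop
    simpa using tendsto_const_nhds.add this
  rw [Finset.prod_const, Nat.card_Ico] at hQt
  have hQne : ((p:ℝ) ^ (p - 1)) ≠ 0 := by positivity
  have key : Tendsto (fun n => (Stirling.stirlingSeq n ^ p / Stirling.stirlingSeq (p * n))
      * (2 : ℝ) ^ (((p : ℝ) - 1) / 2) * (p : ℝ) ^ p / Real.sqrt p
      / ∏ j ∈ Ico 1 p, ((p : ℝ) + j / n)) atTop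
      (𝓝 ((Real.sqrt Real.pi ^ p / Real.sqrt Real.pi)
        * (2 : ℝ) ^ (((p : ℝ) - 1) / 2) * (p : ℝ) ^ p / Real.sqrt p / (p:ℝ) ^ (p - 1))) :=
    ((((hS.mul_const _).mul_const _).div_const _).div hQt hQne)
  have heq : (Real.sqrt Real.pi ^ p / Real.sqrt Real.pi)
        * (2 : ℝ) ^ (((p : ℝ) - 1) / 2) * (p : ℝ) ^ p / Real.sqrt p / (p:ℝ) ^ (p - 1)
      = (2 * Real.pi) ^ (((p : ℝ) - 1) / 2) * Real.sqrt p := by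
    have h1 : Real.sqrt Real.pi ^ p / Real.sqrt Real.pi
        = Real.pi ^ (((p : ℝ) - 1) / 2) := by
      rw [Real.sqrt_eq_rpow, ← Real.rpow_natCast (Real.pi ^ ((1:ℝ)/2)) p,
        ← Real.rpow_mul Real.pi_pos.le, ← Real.rpow_sub Real.pi_pos]
      ring_nf
    have h2 : (p:ℝ) ^ p / (p:ℝ) ^ (p - 1) = (p:ℝ) := by
      have hppow : (p:ℝ) ^ p = (p:ℝ) ^ (p - 1) * p := by
        have h := pow_succ (p:ℝ) (p - 1)
        rwa [show p - 1 + 1 = p by omega] at h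
      rw [hppow, mul_div_cancel_left₀ _ (by positivity)]
    have h3 : (p:ℝ) / Real.sqrt p = Real.sqrt p := Real.div_sqrt
    have h4 : (2:ℝ) ^ (((p : ℝ) - 1) / 2) * Real.pi ^ (((p : ℝ) - 1) / 2)
        = (2 * Real.pi) ^ (((p : ℝ) - 1) / 2) :=
      (Real.mul_rpow (by norm_num) Real.pi_pos.le).symm
    calc Real.sqrt Real.pi ^ p / Real.sqrt Real.pi
          * (2 : ℝ) ^ (((p : ℝ) - 1) / 2) * (p : ℝ) ^ p / Real.sqrt p / (p:ℝ) ^ (p - 1)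
        = (Real.sqrt Real.pi ^ p / Real.sqrt Real.pi * (2 : ℝ) ^ (((p : ℝ) - 1) / 2))
          * ((p:ℝ) ^ p / (p:ℝ) ^ (p - 1) / Real.sqrt p) := by ring
      _ = Real.pi ^ (((p : ℝ) - 1) / 2) * (2 : ℝ) ^ (((p : ℝ) - 1) / 2) * Real.sqrt p := by
          rw [h1, h2, h3]
      _ = (2 * Real.pi) ^ (((p : ℝ) - 1) / 2) * Real.sqrt p := by rw [← h4]; ring
  rw [heq] at key
  refine key.congr' ?_
  filter_upwards [eventually_gt_atTop 0] with n hn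
  exact (Aseq_eq p n hp hn).symm

lemma cpow_sum_aux {x : ℂ} (hx : x ≠ 0) (s : Finset ℕ) (f : ℕ → ℂ) :
    x ^ (∑ i ∈ s, f i) = ∏ i ∈ s, x ^ f i := by
  classical
  induction s using Finset.cons_induction with
  | empty => simp
  | cons a s ha ih => rw [Finset.sum_cons, Finset.prod_cons, Complex.cpow_add _ _ hx, ih]

lemma key_identity (p : ℕ) (hp : 0 < p) (z : ℂ) (hz : 0 < z.re) (n : ℕ) (hn : 0 < n) :
    ∏ m ∈ range p, Complex.GammaSeq ((z + m) / p) n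
      = ((Aseq p n : ℝ) : ℂ)
        * Complex.exp (z * ((Real.log n : ℂ) - (Real.log (p * (n + 1) - 1 : ℕ) : ℂ)))
        * Complex.GammaSeq z (p * (n + 1) - 1) := by
  have hpc : (p : ℂ) ≠ 0 := Nat.cast_ne_zero.2 hp.ne'
  have hnc : (n : ℂ) ≠ 0 := Nat.cast_ne_zero.2 hn.ne'
  set N := p * (n + 1) - 1 with hNdef
  have hN1 : N + 1 = p * (n + 1) := Nat.succ_pred_eq_of_pos (Nat.mul_pos hp n.succ_pos)
  have hNpos : 0 < N := by
    have : 2 ≤ p * (n + 1) := by nlinarith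
    omega
  have hNc : (N : ℂ) ≠ 0 := Nat.cast_ne_zero.2 hNpos.ne'
  have hzk : ∀ k : ℕ, (z + (k : ℂ)) ≠ 0 := by
    intro k h
    have h1 : 0 < (z + (k : ℂ)).re := by
      rw [Complex.add_re, Complex.natCast_re]
      exact add_pos_of_pos_of_nonneg hz k.cast_nonneg
    rw [h] at h1
    simp at h1
  have hPi : (∏ k ∈ range (p * (n + 1)), (z + (k : ℂ))) ≠ 0 :=
    Finset.prod_ne_zero_iff.2 fun k _ => hzk k
  -- denominators
  have hden : ∀ m : ℕ, (∏ j ∈ range (n + 1), ((z + m) / (p : ℂ) + j))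
      = (∏ j ∈ range (n + 1), (z + ((m + p * j : ℕ) : ℂ))) / (p : ℂ) ^ (n + 1) := by
    intro m
    calc ∏ j ∈ range (n + 1), ((z + m) / (p : ℂ) + j)
        = ∏ j ∈ range (n + 1), ((z + ((m + p * j : ℕ) : ℂ)) / (p : ℂ)) :=
          Finset.prod_congr rfl fun j _ => by push_cast; field_simp; ring
      _ = (∏ j ∈ range (n + 1), (z + ((m + p * j : ℕ) : ℂ)))
            / ∏ _j ∈ range (n + 1), (p : ℂ) := Finset.prod_div_distrib _ _
      _ = _ := by rw [Finset.prod_const, card_range]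
  have hdenfull : ∏ m ∈ range p, ∏ j ∈ range (n + 1), ((z + m) / (p : ℂ) + j)
      = (∏ k ∈ range (p * (n + 1)), (z + (k : ℂ))) / (p : ℂ) ^ (p * (n + 1)) := by
    rw [Finset.prod_congr rfl fun m _ => hden m, Finset.prod_div_distrib, Finset.prod_const,
      card_range, ← pow_mul, prod_range_mul_aux p (n + 1) hp (fun k => z + (k : ℂ)),
      Nat.mul_comm (n + 1) p]
  -- numerator exponent sum
  have hsum : ∑ m ∈ range p, (z + (m : ℂ)) / (p : ℂ) = z + ((p : ℂ) - 1) / 2 := by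
    rw [← Finset.sum_div, Finset.sum_add_distrib, Finset.sum_const, card_range, nsmul_eq_mul]
    have hs : ∑ m ∈ range p, (m : ℂ) = (p : ℂ) * ((p : ℂ) - 1) / 2 := by
      have h2 : ((∑ m ∈ range p, m) * 2 : ℕ) = (p * (p - 1) : ℕ) := Finset.sum_range_id_mul_two p
      have h3 : (∑ m ∈ range p, (m : ℂ)) * 2 = (p : ℂ) * ((p : ℂ) - 1) := by
        have := congrArg (Nat.cast : ℕ → ℂ) h2
        push_cast [Nat.cast_sub hp] at this
        convert this using 2
      linear_combination h3 / 2
    rw [hs]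
    field_simp
  have hnum : ∏ m ∈ range p, (n : ℂ) ^ ((z + m) / (p : ℂ))
      = (n : ℂ) ^ (z + ((p : ℂ) - 1) / 2) := by
    rw [← cpow_sum_aux hnc, hsum]
  -- cast of Aseq
  have hA : ((Aseq p n : ℝ) : ℂ)
      = (n : ℂ) ^ (((p : ℂ) - 1) / 2) * ((n ! : ℕ) : ℂ) ^ p * (p : ℂ) ^ (p * (n + 1))
        / ((N ! : ℕ) : ℂ) := by
    rw [Aseq]
    push_cast [Complex.ofReal_cpow n.cast_nonneg]
    ring
  -- exponentials
  have hnz : (n : ℂ) ^ z = Complex.exp (z * (Real.log n : ℂ)) := by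
    rw [Complex.cpow_def_of_ne_zero hnc, Complex.natCast_log, mul_comm]
  have hNz : (N : ℂ) ^ z = Complex.exp (z * (Real.log N : ℂ)) := by
    rw [Complex.cpow_def_of_ne_zero hNc, Complex.natCast_log, mul_comm]
  -- assemble
  simp only [Complex.GammaSeq]
  rw [Finset.prod_div_distrib, Finset.prod_mul_distrib, Finset.prod_const, card_range, hnum,
    hdenfull, hA, hN1, Complex.cpow_add _ _ hnc, hnz, hNz, mul_sub, Complex.exp_sub]
  have hNF : ((N ! : ℕ) : ℂ) ≠ 0 := Nat.cast_ne_zero.2 N.factorial_pos.ne'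
  have hE2 : Complex.exp (z * (Real.log N : ℂ)) ≠ 0 := Complex.exp_ne_zero _
  field_simp

/-- Gauss multiplication formula:
`∏_{m=0}^{p-1} Γ((z+m)/p) = (2π)^{(p-1)/2} p^{1/2 - z} Γ(z)` for `Re z > 0`. -/
theorem Gamma_multiplication (p : ℕ) (hp : 0 < p) (z : ℂ) (hz : 0 < z.re) :
    ∏ m ∈ Finset.range p, Complex.Gamma ((z + m) / p)
      = ((2 * Real.pi) ^ (((p : ℝ) - 1) / 2) : ℝ)
          * Complex.exp ((1 / 2 - z) * (Real.log p : ℂ)) * Complex.Gamma z := by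
  have hp' : (0:ℝ) < p := by exact_mod_cast hp
  -- limit of the product of Gamma sequences
  have h1 : Tendsto (fun n => ∏ m ∈ range p, Complex.GammaSeq ((z + m) / p) n) atTop
      (𝓝 (∏ m ∈ range p, Complex.Gamma ((z + m) / p))) :=
    tendsto_finset_prod _ fun m _ => Complex.GammaSeq_tendsto_Gamma _
  -- limit of the shifted Gamma sequence
  have hNat : Tendsto (fun n : ℕ => p * (n + 1) - 1) atTop atTop := by
    refine tendsto_atTop_mono (fun n => ?_) tendsto_id
    have : n + 1 ≤ p * (n + 1) := Nat.le_mul_of_pos_left _ hp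
    simp only [id_eq]
    omega
  have h2 : Tendsto (fun n : ℕ => Complex.GammaSeq z (p * (n + 1) - 1)) atTop
      (𝓝 (Complex.Gamma z)) := (Complex.GammaSeq_tendsto_Gamma z).comp hNat
  -- limit of the log difference
  have hfrac : Tendsto (fun n : ℕ => (p:ℝ) + ((p:ℝ) - 1) / n) atTop (𝓝 (p:ℝ)) := by
    have : Tendsto (fun n : ℕ => ((p:ℝ) - 1) / n) atTop (𝓝 0) :=
      Tendsto.div_atTop tendsto_const_nhds tendsto_natCast_atTop_atTop
    simpa using tendsto_const_nhds.add this
  have hlogdiff : Tendsto (fun n : ℕ => Real.log n - Real.log ((p * (n + 1) - 1 : ℕ) : ℝ))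
      atTop (𝓝 (-Real.log p)) := by
    have hcomp : Tendsto (fun n : ℕ => Real.log ((p:ℝ) + ((p:ℝ) - 1) / n)) atTop
        (𝓝 (Real.log p)) := ((Real.continuousAt_log hp'.ne').tendsto).comp hfrac
    have heq : ∀ᶠ n : ℕ in atTop, Real.log ((p:ℝ) + ((p:ℝ) - 1) / n)
        = Real.log ((p * (n + 1) - 1 : ℕ) : ℝ) - Real.log n := by
      filter_upwards [eventually_gt_atTop 0] with n hn
      have hn' : (0:ℝ) < n := by exact_mod_cast hn
      have h1le : 1 ≤ p * (n + 1) := Nat.one_le_iff_ne_zero.2 (Nat.mul_pos hp n.succ_pos).ne'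
      have hcast : ((p * (n + 1) - 1 : ℕ) : ℝ) = (p:ℝ) * (n + 1) - 1 := by
        push_cast [Nat.cast_sub h1le]
        ring
      have hval : (p:ℝ) + ((p:ℝ) - 1) / n = ((p * (n + 1) - 1 : ℕ) : ℝ) / n := by
        rw [hcast]
        field_simp
        ring
      have hNpos : (0:ℝ) < ((p * (n + 1) - 1 : ℕ) : ℝ) := by
        have hnn : 0 < p * (n + 1) - 1 := by
          have h2 : n + 1 ≤ p * (n + 1) := Nat.le_mul_of_pos_left _ hp
          omega
        exact_mod_cast hnn
      rw [hval, Real.log_div hNpos.ne' hn'.ne']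
    rw [show -Real.log p = -(Real.log p) from rfl]
    have := (hcomp.congr' heq).neg
    simpa [neg_sub] using this
  -- limit of the exponential factor
  have hexp : Tendsto (fun n : ℕ => Complex.exp (z * ((Real.log n : ℂ)
      - (Real.log ((p * (n + 1) - 1 : ℕ)) : ℂ)))) atTop
      (𝓝 (Complex.exp (z * ((-Real.log p : ℝ) : ℂ)))) := by
    have hc : Continuous fun r : ℝ => Complex.exp (z * (r : ℂ)) :=
      Complex.continuous_exp.comp (continuous_const.mul Complex.continuous_ofReal)
    have := (hc.tendsto _).comp hlogdiff
    simpa [Function.comp_def] using this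
  -- limit of the cast of Aseq
  have hcast : Tendsto (fun n : ℕ => ((Aseq p n : ℝ) : ℂ)) atTop
      (𝓝 ((( (2 * Real.pi) ^ (((p : ℝ) - 1) / 2) * Real.sqrt p : ℝ)) : ℂ)) :=
    (Complex.continuous_ofReal.tendsto _).comp (Aseq_tendsto p hp)
  -- combined limit
  have hcomb : Tendsto (fun n : ℕ => ((Aseq p n : ℝ) : ℂ)
      * Complex.exp (z * ((Real.log n : ℂ) - (Real.log ((p * (n + 1) - 1 : ℕ)) : ℂ)))
      * Complex.GammaSeq z (p * (n + 1) - 1)) atTop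
      (𝓝 ((((2 * Real.pi) ^ (((p : ℝ) - 1) / 2) * Real.sqrt p : ℝ) : ℂ)
        * Complex.exp (z * ((-Real.log p : ℝ) : ℂ)) * Complex.Gamma z)) :=
    (hcast.mul hexp).mul h2
  have hmain := tendsto_nhds_unique h1 (hcomb.congr' (by
    filter_upwards [eventually_gt_atTop 0] with n hn
    exact (key_identity p hp z hz n hn).symm))
  rw [hmain]
  -- identify the constant
  have hsqrt : (Real.sqrt p : ℝ) = Real.exp (Real.log p * (1 / 2)) := by
    rw [Real.sqrt_eq_rpow, Real.rpow_def_of_pos hp']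
  rw [hsqrt]
  push_cast [Complex.ofReal_exp]
  rw [mul_assoc, mul_assoc, mul_assoc]
  congr 1
  rw [← mul_assoc, ← Complex.exp_add]
  congr 2
  ring
end
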